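/- arXiv:2512.14904 — 2 statements merged into one kernel-verified Lean document; each statement's English description precedes it below -/
import Mathlib

section
/- Let Q be an invertible symmetric rational n×n matrix, α ∈ ℚⁿ, t ∈ ℚ, and let Q̄ be the (n+2)×(n+2) symmetric block matrix [[Q, A],[Aᵀ, B]] with A = [α α] and B = [[t+1,t],[t,t-1]]. Then Q̄ is invertible and its inverse is the block matrix [[Q⁻¹, -v·(1,-1)],[-(1,-1)ᵀ·vᵀ, S⁻¹]], where v = Q⁻¹α, d = αᵀQ⁻¹α, and S⁻¹ = [[d+1-t, t-d],[t-d, d-t-1]]. -/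
open Matrix

theorem block_matrix_inverse (n : ℕ) (Q : Matrix (Fin n) (Fin n) ℚ)
    (hQ : IsUnit Q.det) (hsym : Q.IsSymm) (α : Fin n → ℚ) (t : ℚ)
    (A : Matrix (Fin n) (Fin 2) ℚ) (hA : ∀ i j, A i j = α i)
    (B : Matrix (Fin 2) (Fin 2) ℚ) (hB : B = !![t + 1, t; t, t - 1])
    (Qbar : Matrix (Fin n ⊕ Fin 2) (Fin n ⊕ Fin 2) ℚ)
    (hQbar : Qbar = Matrix.fromBlocks Q A Aᵀ B)
    (v : Fin n → ℚ) (hv : v = Q⁻¹ *ᵥ α) (d : ℚ) (hd : d = α ⬝ᵥ (Q⁻¹ *ᵥ α))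
    (C : Matrix (Fin n) (Fin 2) ℚ) (hC : ∀ i, C i 0 = -v i ∧ C i 1 = v i)
    (Sinv : Matrix (Fin 2) (Fin 2) ℚ)
    (hSinv : Sinv = !![d + 1 - t, t - d; t - d, d - t - 1]) :
    IsUnit Qbar.det ∧ Qbar⁻¹ = Matrix.fromBlocks Q⁻¹ C Cᵀ Sinv := by
  have hQQ : Q * Q⁻¹ = 1 := Matrix.mul_nonsing_inv Q hQ
  have hQisym : ∀ i k, Q⁻¹ i k = Q⁻¹ k i := by
    intro i k
    have h : Q⁻¹ᵀ = Q⁻¹ := by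
      rw [Matrix.transpose_nonsing_inv, hsym.eq]
    exact (congrFun (congrFun h i) k).symm
  have hCn : ∀ k, C k 0 = -v k := fun k => (hC k).1
  have hCp : ∀ k, C k 1 = v k := fun k => (hC k).2
  have hQv : ∀ i, (∑ k, Q i k * v k) = α i := by
    intro i
    have h : Q *ᵥ v = α := by
      rw [hv, Matrix.mulVec_mulVec, hQQ, Matrix.one_mulVec]
    simpa [Matrix.mulVec, dotProduct] using congrFun h i
  have hvk : ∀ k, (∑ i, α i * Q⁻¹ i k) = v k := by
    intro k
    rw [hv]
    simp only [Matrix.mulVec, dotProduct]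
    exact Finset.sum_congr rfl fun i _ => by rw [hQisym k i, mul_comm]
  have hdv : (∑ i, α i * v i) = d := by
    rw [hd, hv]
    simp [dotProduct]
  have key : Qbar * Matrix.fromBlocks Q⁻¹ C Cᵀ Sinv = 1 := by
    rw [hQbar, Matrix.fromBlocks_multiply, ← Matrix.fromBlocks_one]
    have h11 : Q * Q⁻¹ + A * Cᵀ = 1 := by
      have h0 : A * Cᵀ = 0 := by
        ext i j
        simp [Matrix.mul_apply, Fin.sum_univ_two, hA, hCn, hCp]
      rw [h0, add_zero, hQQ]
    have h12 : Q * C + A * Sinv = 0 := by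
      ext i j
      fin_cases j <;>
        simp [Matrix.mul_apply, Fin.sum_univ_two, hA, hSinv, hCn, hCp, mul_neg,
          Finset.sum_neg_distrib, hQv i] <;> ring
    have h21 : Aᵀ * Q⁻¹ + B * Cᵀ = 0 := by
      ext j k
      fin_cases j <;>
        simp [Matrix.mul_apply, Matrix.vecMul, dotProduct, Fin.sum_univ_two, hA, hB,
          hCn, hCp, Matrix.transpose_apply, hvk k] <;> ring
    have h22 : Aᵀ * C + B * Sinv = 1 := by
      ext j k
      fin_cases j <;> fin_cases k <;>
        simp [Matrix.mul_apply, Matrix.vecMul, dotProduct, Fin.sum_univ_two, hA, hB, hSinv,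
          hCn, hCp, mul_neg, Finset.sum_neg_distrib, Matrix.transpose_apply, Matrix.one_apply,
          hdv] <;> ring
    rw [h11, h12, h21, h22]
  exact ⟨Matrix.isUnit_det_of_right_inverse key, Matrix.inv_eq_right_inv key⟩
end

section
/- With Q̄, v, d, S as above, and r ∈ ℚⁿ, r ∈ ℚ arbitrary, the vector z = (r₁,...,rₙ, r, r+2) satisfies zᵀ Q̄⁻¹ z = rᵀ Q⁻¹ r + 4 rᵀ v - 4r + 4d - 4t - 4, where v = Q⁻¹ α and d = αᵀ Q⁻¹ α. -/
open Matrix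

theorem quadratic_form_block_inverse (n : ℕ) (Q : Matrix (Fin n) (Fin n) ℚ)
    (hQ : IsUnit Q.det) (hsym : Q.IsSymm) (α : Fin n → ℚ) (t : ℚ)
    (A : Matrix (Fin n) (Fin 2) ℚ) (hA : ∀ i j, A i j = α i)
    (B : Matrix (Fin 2) (Fin 2) ℚ) (hB : B = !![t + 1, t; t, t - 1])
    (Qbar : Matrix (Fin n ⊕ Fin 2) (Fin n ⊕ Fin 2) ℚ)
    (hQbar : Qbar = Matrix.fromBlocks Q A Aᵀ B)
    (v : Fin n → ℚ) (hv : v = Q⁻¹ *ᵥ α) (d : ℚ) (hd : d = α ⬝ᵥ (Q⁻¹ *ᵥ α))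
    (r : Fin n → ℚ) (r₀ : ℚ)
    (z : Fin n ⊕ Fin 2 → ℚ)
    (hz : z = Sum.elim r (fun j => if j = 0 then r₀ else r₀ + 2)) :
    z ⬝ᵥ (Qbar⁻¹ *ᵥ z) = r ⬝ᵥ (Q⁻¹ *ᵥ r) + 4 * (r ⬝ᵥ v) - 4 * r₀ + 4 * d - 4 * t - 4 := by
  have hQQ : Q * Q⁻¹ = 1 := Matrix.mul_nonsing_inv Q hQ
  have hQiQ : Q⁻¹ * Q = 1 := Matrix.nonsing_inv_mul Q hQ
  have hQisym : Q⁻¹.IsSymm := by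
    unfold Matrix.IsSymm
    rw [Matrix.transpose_nonsing_inv, hsym.eq]
  -- the blocks of the inverse
  set C : Matrix (Fin n) (Fin 2) ℚ := Matrix.of (fun i j => if j = 0 then -v i else v i) with hC
  set C₂ : Matrix (Fin 2) (Fin n) ℚ := Matrix.of (fun j i => if j = 0 then -v i else v i) with hC₂
  set Sinv : Matrix (Fin 2) (Fin 2) ℚ := !![d + 1 - t, t - d; t - d, d - 1 - t] with hS
  set M : Matrix (Fin n ⊕ Fin 2) (Fin n ⊕ Fin 2) ℚ := Matrix.fromBlocks Q⁻¹ C C₂ Sinv with hM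
  have hQv : Q *ᵥ v = α := by
    rw [hv, Matrix.mulVec_mulVec, hQQ, Matrix.one_mulVec]
  have hαQi : α ᵥ* Q⁻¹ = v := by
    rw [← hQisym.eq, Matrix.vecMul_transpose, hv]
  have key : Qbar * M = 1 := by
    rw [hQbar, hM, Matrix.fromBlocks_multiply]
    have e11 : Q * Q⁻¹ + A * C₂ = 1 := by
      have : A * C₂ = 0 := by
        ext i j
        simp [hC₂, Matrix.mul_apply, Fin.sum_univ_two, hA]
      rw [this, add_zero, hQQ]
    have e12 : Q * C + A * Sinv = 0 := by
      ext i j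
      have h1 : (Q * C) i j = if j = 0 then -α i else α i := by
        rw [← hQv]
        simp only [hC, Matrix.mul_apply, Matrix.of_apply, Matrix.mulVec, dotProduct]
        split <;> simp [Finset.mul_sum, mul_neg, Finset.sum_neg_distrib]
      have h2 : (A * Sinv) i j = if j = 0 then α i else -α i := by
        simp only [hS, Matrix.mul_apply, Fin.sum_univ_two, hA]
        fin_cases j <;> simp <;> ring
      simp only [Matrix.add_apply, h1, h2, Matrix.zero_apply]
      split <;> ring
    have e21 : Aᵀ * Q⁻¹ + B * C₂ = 0 := by
      ext j i
      have h1 : (Aᵀ * Q⁻¹) j i = v i := by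
        have : (Aᵀ * Q⁻¹) j i = (α ᵥ* Q⁻¹) i := by
          simp [Matrix.mul_apply, Matrix.vecMul, dotProduct, hA]
        rw [this, hαQi]
      have h2 : (B * C₂) j i = -v i := by
        simp only [hB, hC₂, Matrix.mul_apply, Fin.sum_univ_two, Matrix.of_apply]
        fin_cases j <;> simp <;> ring
      simp [Matrix.add_apply, h1, h2]
    have e22 : Aᵀ * C + B * Sinv = 1 := by
      have hdv : α ⬝ᵥ v = d := by rw [hv, hd]
      ext j j'
      have h1 : (Aᵀ * C) j j' = if j' = 0 then -d else d := by
        simp only [hC, Matrix.mul_apply, Matrix.transpose_apply, Matrix.of_apply, hA]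
        rw [← hdv]
        simp only [dotProduct]
        split <;> simp [mul_neg, Finset.sum_neg_distrib]
      have h2 : (B * Sinv) j j' = (if j' = 0 then d else -d) + (1 : Matrix (Fin 2) (Fin 2) ℚ) j j' := by
        simp only [hB, hS, Matrix.mul_apply, Fin.sum_univ_two]
        fin_cases j <;> fin_cases j' <;> simp [Matrix.one_apply] <;> ring
      simp only [Matrix.add_apply, h1, h2]
      split <;> ring
    rw [e11, e12, e21, e22, Matrix.fromBlocks_one]
  have hMinv : Qbar⁻¹ = M := Matrix.inv_eq_right_inv key
  subst hz
  rw [hMinv, hM, Matrix.fromBlocks_mulVec]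
  set u : Fin 2 → ℚ := fun j => if j = 0 then r₀ else r₀ + 2 with hu
  have hCu : C *ᵥ u = fun i => 2 * v i := by
    funext i
    simp [hC, hu, Matrix.mulVec, dotProduct, Fin.sum_univ_two]
    ring
  have hC₂r : C₂ *ᵥ r = fun j => if j = 0 then -(r ⬝ᵥ v) else r ⬝ᵥ v := by
    funext j
    simp only [hC₂, Matrix.mulVec, dotProduct, Matrix.of_apply]
    split <;> simp [mul_comm, Finset.sum_neg_distrib, neg_mul]
  simp only [Sum.elim_comp_inl, Sum.elim_comp_inr]
  rw [sumElim_dotProduct_sumElim]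
  rw [dotProduct_add, dotProduct_add, hCu, hC₂r]
  have h3 : r ⬝ᵥ (fun i => 2 * v i) = 2 * (r ⬝ᵥ v) := by
    simp [dotProduct, Finset.mul_sum]; ring_nf
  rw [h3]
  simp only [dotProduct, Fin.sum_univ_two, hu, hS, Matrix.mulVec]
  norm_num [dotProduct, Fin.sum_univ_two]
  ring
end
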